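/- arXiv:2402.10190 — 3 statements merged into one kernel-verified Lean document; each statement's English description precedes it below -/
import Mathlib

section
/- Let 0 < r₁ < r₂, Q₁ < Q₂, 0 ≤ Q₁, and let Q̌ : [r₁, r₂] → ℝ be continuous with Q₁ ≤ Q̌(r) ≤ Q₂ for all r. Define ϖ̌(r) = ϖ₁ + Q̌(r)²/(2r) - Q₁²/(2r₁) + (1/2)∫_{r₁}^{r} Q̌(r')²/r'² dr', and D(r) = 1 - 2ϖ̌(r)/r + Q̌(r)²/r². If the polynomial condition min_{r ∈ [r₁,r₂]} (r₁ r² - 2ϖ₁ r₁ r + Q₁² r - Q₂² r + Q₂² r₁) > 0 holds, then D(r) > 0 for all r ∈ [r₁, r₂]. -/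
/-! The charge terms `Q̌(r)²/r²` cancel in `D`, which leaves
`r₁ r² D(r) = r₁ r² - 2ϖ₁ r₁ r + Q₁² r - r₁ r ∫_{r₁}^{r} Q̌²/s²`.
Bounding `Q̌² ≤ Q₂²` gives `∫_{r₁}^{r} Q̌²/s² ≤ Q₂² (1/r₁ - 1/r)`, and with this bound the
right-hand side is at least the polynomial of the hypothesis. -/

open Set intervalIntegral

theorem integral_div_sq_eq {a b : ℝ} (ha : 0 < a) (hab : a ≤ b) (M : ℝ) :
    ∫ s in a..b, M / s ^ 2 = M * (1 / a - 1 / b) := by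
  have h0 : (0 : ℝ) ∉ uIcc a b := by
    rw [uIcc_of_le hab]
    exact fun h => (not_le.2 ha) h.1
  calc ∫ s in a..b, M / s ^ 2 = M * ∫ s in a..b, s ^ (-2 : ℤ) := by
        rw [← integral_const_mul]
        congr 1
    _ = M * (1 / a - 1 / b) := by
        rw [integral_zpow (Or.inr ⟨by decide, h0⟩)]
        norm_num
        left
        ring

theorem integral_div_sq_le_of_le {f : ℝ → ℝ} {a b M : ℝ} (ha : 0 < a) (hab : a ≤ b)
    (hf : ContinuousOn f (Icc a b)) (hfM : ∀ s ∈ Icc a b, f s ≤ M) :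
    ∫ s in a..b, f s / s ^ 2 ≤ M * (1 / a - 1 / b) := by
  have hsq : ∀ s ∈ uIcc a b, s ^ 2 ≠ 0 := fun s hs =>
    pow_ne_zero 2 (ha.trans_le (uIcc_of_le hab ▸ hs).1).ne'
  have hf' : ContinuousOn f (uIcc a b) := uIcc_of_le hab ▸ hf
  rw [← integral_div_sq_eq ha hab M]
  refine integral_mono_on hab ((hf'.div (continuousOn_pow 2) hsq).intervalIntegrable)
    ((continuousOn_const.div (continuousOn_pow 2) hsq).intervalIntegrable) fun s hs => ?_
  exact div_le_div_of_nonneg_right (hfM s hs) (sq_nonneg s)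

theorem rn_coefficient_pos_of_integral_le {r₁ r ϖ₁ Q₁ Q₂ q I : ℝ} (hr₁ : 0 < r₁) (hr : 0 < r)
    (hI : I ≤ Q₂ ^ 2 * (1 / r₁ - 1 / r))
    (hpoly : 0 < r₁ * r ^ 2 - 2 * ϖ₁ * r₁ * r + Q₁ ^ 2 * r - Q₂ ^ 2 * r + Q₂ ^ 2 * r₁) :
    0 < 1 - 2 * (ϖ₁ + q ^ 2 / (2 * r) - Q₁ ^ 2 / (2 * r₁) + (1 / 2) * I) / r + q ^ 2 / r ^ 2 := by
  have hscaled : r₁ * r * I ≤ Q₂ ^ 2 * r - Q₂ ^ 2 * r₁ := by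
    calc r₁ * r * I ≤ r₁ * r * (Q₂ ^ 2 * (1 / r₁ - 1 / r)) := by gcongr
      _ = Q₂ ^ 2 * r - Q₂ ^ 2 * r₁ := by field_simp
  have hD : 1 - 2 * (ϖ₁ + q ^ 2 / (2 * r) - Q₁ ^ 2 / (2 * r₁) + (1 / 2) * I) / r + q ^ 2 / r ^ 2
      = (r₁ * r ^ 2 - 2 * ϖ₁ * r₁ * r + Q₁ ^ 2 * r - r₁ * r * I) / (r₁ * r ^ 2) := by
    field_simp
    ring
  rw [hD]
  exact div_pos (by linarith) (by positivity)

theorem stmt1_general (r₁ r₂ Q₁ Q₂ ϖ₁ : ℝ) (hr₁ : 0 < r₁)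
    (hQ₁ : 0 ≤ Q₁)
    (Qc : ℝ → ℝ) (hQcont : ContinuousOn Qc (Set.Icc r₁ r₂))
    (hQbound : ∀ r ∈ Set.Icc r₁ r₂, Q₁ ≤ Qc r ∧ Qc r ≤ Q₂)
    (hpoly : ∀ r ∈ Set.Icc r₁ r₂,
      0 < r₁ * r ^ 2 - 2 * ϖ₁ * r₁ * r + Q₁ ^ 2 * r - Q₂ ^ 2 * r + Q₂ ^ 2 * r₁) :
    ∀ r ∈ Set.Icc r₁ r₂,
      0 < 1 - 2 * (ϖ₁ + (Qc r) ^ 2 / (2 * r) - Q₁ ^ 2 / (2 * r₁)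
            + (1 / 2) * ∫ s in r₁..r, (Qc s) ^ 2 / s ^ 2) / r
          + (Qc r) ^ 2 / r ^ 2 := by
  intro r hr
  have hsub : Icc r₁ r ⊆ Icc r₁ r₂ := Icc_subset_Icc le_rfl hr.2
  have hsq_le : ∀ s ∈ Icc r₁ r, Qc s ^ 2 ≤ Q₂ ^ 2 := fun s hs => by
    obtain ⟨hlo, hhi⟩ := hQbound s (hsub hs)
    exact pow_le_pow_left₀ (hQ₁.trans hlo) hhi 2
  exact rn_coefficient_pos_of_integral_le hr₁ (hr₁.trans_le hr.1)
    (integral_div_sq_le_of_le hr₁ hr.1 ((hQcont.mono hsub).pow 2) hsq_le) (hpoly r hr)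

/-- Positivity of the Reissner–Nordström-type coefficient `D` along the bounce
hypersurface, given the polynomial condition on the admissible parameters. -/
theorem stmt1 (r₁ r₂ Q₁ Q₂ ϖ₁ : ℝ) (hr₁ : 0 < r₁) (hr₁₂ : r₁ < r₂)
    (hQ : Q₁ < Q₂) (hQ₁ : 0 ≤ Q₁) (hϖ₁ : 0 ≤ ϖ₁)
    (Qc : ℝ → ℝ) (hQcont : ContinuousOn Qc (Set.Icc r₁ r₂))
    (hQbound : ∀ r ∈ Set.Icc r₁ r₂, Q₁ ≤ Qc r ∧ Qc r ≤ Q₂)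
    (hpoly : ∀ r ∈ Set.Icc r₁ r₂,
      0 < r₁ * r ^ 2 - 2 * ϖ₁ * r₁ * r + Q₁ ^ 2 * r - Q₂ ^ 2 * r + Q₂ ^ 2 * r₁) :
    ∀ r ∈ Set.Icc r₁ r₂,
      0 < 1 - 2 * (ϖ₁ + (Qc r) ^ 2 / (2 * r) - Q₁ ^ 2 / (2 * r₁)
            + (1 / 2) * ∫ s in r₁..r, (Qc s) ^ 2 / s ^ 2) / r
          + (Qc r) ^ 2 / r ^ 2 :=
  stmt1_general r₁ r₂ Q₁ Q₂ ϖ₁ hr₁ hQ₁ Qc hQcont hQbound hpoly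
end

section
/- Given ϖ₂ > 0 and Q₂ > 0, there exist 0 < r₁ < r₂ such that, with r₁ = Q₂(Q₂/(2ϖ₂) - ε) and r₂ = Q₂(Q₂/(2ϖ₂) + ε) for all sufficiently small ε > 0, the following hold: (i) 2r₁ϖ₂ < Q₂² < 2r₂ϖ₂; (ii) min_{r ∈ [r₁,r₂]} (r₁ r² - Q₂² r + Q₂² r₁) > 0; and (iii) if ϖ₂ ≥ Q₂, additionally r₂ < ϖ₂ - sqrt(ϖ₂² - Q₂²). -/
/-- Existence of admissible regular-center parameters: for `ϖ₂, Q₂ > 0` and all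
sufficiently small `ε > 0`, the radii `r₁ = Q₂(Q₂/(2ϖ₂) - ε)`, `r₂ = Q₂(Q₂/(2ϖ₂) + ε)`
satisfy `0 < r₁ < r₂`, the admissibility inequalities `2r₁ϖ₂ < Q₂² < 2r₂ϖ₂`,
the polynomial positivity condition, and (if `ϖ₂ ≥ Q₂`) `r₂ < ϖ₂ - √(ϖ₂² - Q₂²)`. -/
theorem stmt3 (ϖ₂ Q₂ : ℝ) (hϖ₂ : 0 < ϖ₂) (hQ₂ : 0 < Q₂) :
    ∃ ε₀ > 0, ∀ ε : ℝ, 0 < ε → ε ≤ ε₀ →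
      0 < Q₂ * (Q₂ / (2 * ϖ₂) - ε) ∧
      Q₂ * (Q₂ / (2 * ϖ₂) - ε) < Q₂ * (Q₂ / (2 * ϖ₂) + ε) ∧
      2 * (Q₂ * (Q₂ / (2 * ϖ₂) - ε)) * ϖ₂ < Q₂ ^ 2 ∧
      Q₂ ^ 2 < 2 * (Q₂ * (Q₂ / (2 * ϖ₂) + ε)) * ϖ₂ ∧
      (∀ r ∈ Set.Icc (Q₂ * (Q₂ / (2 * ϖ₂) - ε)) (Q₂ * (Q₂ / (2 * ϖ₂) + ε)),
        0 < (Q₂ * (Q₂ / (2 * ϖ₂) - ε)) * r ^ 2 - Q₂ ^ 2 * r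
            + Q₂ ^ 2 * (Q₂ * (Q₂ / (2 * ϖ₂) - ε))) ∧
      (Q₂ ≤ ϖ₂ → Q₂ * (Q₂ / (2 * ϖ₂) + ε) < ϖ₂ - Real.sqrt (ϖ₂ ^ 2 - Q₂ ^ 2)) := by
  have h2ϖ : (0:ℝ) < 2 * ϖ₂ := by linarith
  set c : ℝ := Q₂ / (2 * ϖ₂) with hcdef
  have hcpos : 0 < c := div_pos hQ₂ h2ϖ
  have hkey : Q₂ * c * (2 * ϖ₂) = Q₂ ^ 2 := by
    rw [hcdef, mul_assoc, div_mul_cancel₀ _ (ne_of_gt h2ϖ)]; ring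
  set δ : ℝ := if Q₂ ≤ ϖ₂ then
      (ϖ₂ - Real.sqrt (ϖ₂ ^ 2 - Q₂ ^ 2) - Q₂ * c) / (2 * Q₂) else 1 with hδdef
  have hδpos : 0 < δ := by
    rw [hδdef]; split_ifs with h
    · have hy : 0 < ϖ₂ - Q₂ * c := by nlinarith
      have hs : Real.sqrt (ϖ₂ ^ 2 - Q₂ ^ 2) < ϖ₂ - Q₂ * c := by
        rw [Real.sqrt_lt' hy]
        nlinarith [mul_pos (mul_pos hQ₂ hcpos) (mul_pos hQ₂ hcpos)]
      have : 0 < ϖ₂ - Real.sqrt (ϖ₂ ^ 2 - Q₂ ^ 2) - Q₂ * c := by linarith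
      positivity
    · norm_num
  refine ⟨min (min (c / 2) (c ^ 3 / 17)) δ, lt_min (lt_min (by positivity) (by positivity)) hδpos,
    fun ε hε hεle => ?_⟩
  have hε1 : ε ≤ c / 2 := le_trans hεle (le_trans (min_le_left _ _) (min_le_left _ _))
  have hε2 : ε ≤ c ^ 3 / 17 := le_trans hεle (le_trans (min_le_left _ _) (min_le_right _ _))
  have hε3 : ε ≤ δ := le_trans hεle (min_le_right _ _)
  have hr1pos : 0 < Q₂ * (c - ε) := by nlinarith
  have hεϖ : 0 < Q₂ * ε * ϖ₂ := by positivity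
  refine ⟨hr1pos, by nlinarith, by nlinarith, by nlinarith, ?_, ?_⟩
  · rintro r ⟨hrl, hru⟩
    have hr1 : Q₂ * c / 2 ≤ Q₂ * (c - ε) := by nlinarith
    have hrpos : 0 < r := lt_of_lt_of_le hr1pos hrl
    have hsq : Q₂ * (c - ε) * (Q₂ * (c - ε)) ^ 2 ≤ Q₂ * (c - ε) * r ^ 2 := by
      have : (Q₂ * (c - ε)) ^ 2 ≤ r ^ 2 := by nlinarith
      nlinarith
    have hdiff : r - Q₂ * (c - ε) ≤ 2 * Q₂ * ε := by nlinarith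
    have hcube : (Q₂ * c / 2) ^ 3 ≤ (Q₂ * (c - ε)) ^ 3 := by
      have h1 : 0 < Q₂ * c / 2 := by positivity
      exact pow_le_pow_left₀ (le_of_lt h1) hr1 3
    nlinarith [mul_pos (mul_pos hQ₂ hQ₂) (mul_pos hQ₂ hε),
      pow_pos hQ₂ 3, mul_pos (pow_pos hQ₂ 3) hε]
  · intro h
    have hδeq : δ = (ϖ₂ - Real.sqrt (ϖ₂ ^ 2 - Q₂ ^ 2) - Q₂ * c) / (2 * Q₂) := by
      rw [hδdef, if_pos h]
    have h2 : 2 * Q₂ * ε ≤ ϖ₂ - Real.sqrt (ϖ₂ ^ 2 - Q₂ ^ 2) - Q₂ * c := by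
      have := (le_div_iff₀ (by positivity : (0:ℝ) < 2 * Q₂)).mp (hδeq ▸ hε3)
      linarith
    nlinarith
end

section
/- Let Q₁ < Q₂ and 0 < r₁ < r₂, and for ξ ∈ ℝ define Π(ξ) = ϖ₁ + Q₂²/(2r₂) - Q₁²/(2r₁) + ∫_{r₁}^{r₂} Q̌(r,ξ)²/(2r²) dr, where Q̌(r,ξ) = Q₁ + (Q₂ - Q₁)·ψ(log((r - r₁)/(r₂ - r)), ξ) and ψ is a smooth function with ∂ψ/∂ξ < 0, ψ → 0 pointwise as ξ → +∞, ψ → 1 pointwise as ξ → -∞, and 0 < ψ < 1. Then Π is strictly decreasing in ξ, lim_{ξ→+∞} Π(ξ) = ϖ₁ + (Q₂² - Q₁²)/(2r₂), and lim_{ξ→-∞} Π(ξ) = ϖ₁ + (Q₂² - Q₁²)/(2r₁). Consequently, if 2r₁(ϖ₂ - ϖ₁) < Q₂² - Q₁² < 2r₂(ϖ₂ - ϖ₁), there is a unique ξ* with Π(ξ*) = ϖ₂. -/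
open Filter MeasureTheory Set Topology
open scoped Interval

/-! Since `Q₁ ≥ 0` and `0 < ψ < 1`, the charge `Q̌` lies in `[Q₁, Q₂]` and decreases strictly in `ξ`,
so the integrand `Q̌² / (2r²)` decreases strictly and is bounded by `Q₂² / (2r₁²)` on `[r₁, r₂]`.
Hence `Π` is strictly decreasing, and by dominated convergence it is continuous with limits
obtained by replacing `Q̌` by the constant `Q₁` (as `ξ → +∞`) or `Q₂` (as `ξ → -∞`), where
`∫ c / (2r²) = c / (2r₁) - c / (2r₂)`. The intermediate value theorem then gives `ξ*`. -/

theorem integral_div_two_mul_sq {a b : ℝ} (ha : 0 < a) (hab : a ≤ b) (c : ℝ) :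
    ∫ r in a..b, c / (2 * r ^ 2) = c / (2 * a) - c / (2 * b) := by
  have h0 : (0 : ℝ) ∉ [[a, b]] := by
    rw [uIcc_of_le hab]
    exact fun h => ha.not_ge h.1
  have hzpow := integral_zpow (a := a) (b := b) (n := -2) (Or.inr ⟨by norm_num, h0⟩)
  have hfun : (fun r : ℝ => c / (2 * r ^ 2)) = fun r => c / 2 * r ^ (-2 : ℤ) := by
    ext r
    rw [zpow_neg, zpow_ofNat]
    ring
  rw [hfun, intervalIntegral.integral_const_mul, hzpow]
  push_cast
  simp only [zpow_neg_one]
  ring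

theorem tendsto_intervalIntegral_of_norm_le {ι E : Type*} [NormedAddCommGroup E] [NormedSpace ℝ E]
    {l : Filter ι} [l.IsCountablyGenerated] {F : ι → ℝ → E} {f : ℝ → E} {a b C : ℝ}
    (hmeas : ∀ i, AEStronglyMeasurable (F i) (volume.restrict (Ι a b)))
    (hbound : ∀ i, ∀ r ∈ Ι a b, ‖F i r‖ ≤ C)
    (hlim : ∀ r ∈ Ι a b, Tendsto (fun i => F i r) l (𝓝 (f r))) :
    Tendsto (fun i => ∫ r in a..b, F i r) l (𝓝 (∫ r in a..b, f r)) :=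
  intervalIntegral.tendsto_integral_filter_of_dominated_convergence (fun _ => C)
    (.of_forall hmeas) (.of_forall fun i => ae_of_all _ (hbound i)) intervalIntegrable_const
    (ae_of_all _ hlim)

theorem strictAnti_intervalIntegral {ι : Type*} [Preorder ι] {F : ι → ℝ → ℝ} {a b : ℝ}
    (hab : a < b) (hint : ∀ i, IntervalIntegrable (F i) volume a b)
    (hanti : ∀ r ∈ Ioo a b, StrictAnti fun i => F i r) :
    StrictAnti fun i => ∫ r in a..b, F i r := by
  intro i j hij
  have hpos := intervalIntegral.intervalIntegral_pos_of_pos_on ((hint i).sub (hint j))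
    (fun r hr => sub_pos.2 (hanti r hr hij)) hab
  rw [intervalIntegral.integral_sub (hint i) (hint j)] at hpos
  exact sub_pos.1 hpos

theorem StrictAnti.existsUnique_eq_of_tendsto {α β : Type*} [LinearOrder α] [TopologicalSpace α]
    [PreconnectedSpace α] [Nonempty α] [LinearOrder β] [TopologicalSpace β] [OrderClosedTopology β]
    {f : α → β} {l u y : β} (hf : StrictAnti f) (hcont : Continuous f)
    (htop : Tendsto f atTop (𝓝 l)) (hbot : Tendsto f atBot (𝓝 u)) (hly : l < y) (hyu : y < u) :
    ∃! x, f x = y := by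
  obtain ⟨a, ha⟩ := (htop.eventually_lt_const hly).exists
  obtain ⟨b, hb⟩ := (hbot.eventually_const_lt hyu).exists
  obtain ⟨x, hx⟩ := intermediate_value_univ a b hcont ⟨ha.le, hb.le⟩
  exact ⟨x, hx, fun z hz => hf.injective (hz.trans hx.symm)⟩

section ChargeInterpolation

variable {ι : Type*} {a b Q₁ Q₂ : ℝ} {φ : ℝ → ι → ℝ}

theorem abs_interp_sq_div_le {r s : ℝ} (ha : 0 < a) (har : a ≤ r) (hQ₁ : 0 ≤ Q₁)
    (hQ : Q₁ ≤ Q₂) (hs : s ∈ Icc (0 : ℝ) 1) :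
    |(Q₁ + (Q₂ - Q₁) * s) ^ 2 / (2 * r ^ 2)| ≤ Q₂ ^ 2 / (2 * a ^ 2) := by
  have hQs : 0 ≤ Q₁ + (Q₂ - Q₁) * s := by nlinarith [hs.1]
  have hQsQ₂ : Q₁ + (Q₂ - Q₁) * s ≤ Q₂ := by nlinarith [hs.2]
  rw [abs_of_nonneg (by positivity)]
  exact div_le_div₀ (by positivity) (pow_le_pow_left₀ hQs hQsQ₂ 2) (by positivity)
    (by gcongr)

theorem measurable_interp_sq_div {f : ℝ → ℝ} (hf : Measurable f) :
    Measurable fun r => (Q₁ + (Q₂ - Q₁) * f r) ^ 2 / (2 * r ^ 2) := by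
  fun_prop

theorem tendsto_integral_interp_sq_div {l : Filter ι} [l.IsCountablyGenerated] {φ' : ℝ → ℝ}
    (ha : 0 < a) (hab : a ≤ b) (hQ₁ : 0 ≤ Q₁) (hQ : Q₁ ≤ Q₂)
    (hmeas : ∀ ξ, Measurable fun r => φ r ξ) (h01 : ∀ r ξ, φ r ξ ∈ Icc (0 : ℝ) 1)
    (hlim : ∀ r, Tendsto (φ r) l (𝓝 (φ' r))) :
    Tendsto (fun ξ => ∫ r in a..b, (Q₁ + (Q₂ - Q₁) * φ r ξ) ^ 2 / (2 * r ^ 2)) l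
      (𝓝 (∫ r in a..b, (Q₁ + (Q₂ - Q₁) * φ' r) ^ 2 / (2 * r ^ 2))) := by
  refine tendsto_intervalIntegral_of_norm_le (C := Q₂ ^ 2 / (2 * a ^ 2))
    (fun ξ => ?_) (fun ξ r hr => ?_) (fun r _ => ?_)
  · exact (measurable_interp_sq_div (hmeas ξ)).aestronglyMeasurable
  · rw [uIoc_of_le hab] at hr
    exact abs_interp_sq_div_le ha hr.1.le hQ₁ hQ (h01 r ξ)
  · exact ((tendsto_const_nhds.add ((hlim r).const_mul _)).pow 2).div_const _

theorem tendsto_integral_interp_sq_div_const {l : Filter ι} [l.IsCountablyGenerated] {c : ℝ}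
    (ha : 0 < a) (hab : a ≤ b) (hQ₁ : 0 ≤ Q₁) (hQ : Q₁ ≤ Q₂)
    (hmeas : ∀ ξ, Measurable fun r => φ r ξ) (h01 : ∀ r ξ, φ r ξ ∈ Icc (0 : ℝ) 1)
    (hlim : ∀ r, Tendsto (φ r) l (𝓝 c)) :
    Tendsto (fun ξ => ∫ r in a..b, (Q₁ + (Q₂ - Q₁) * φ r ξ) ^ 2 / (2 * r ^ 2)) l
      (𝓝 ((Q₁ + (Q₂ - Q₁) * c) ^ 2 / (2 * a) - (Q₁ + (Q₂ - Q₁) * c) ^ 2 / (2 * b))) := by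
  rw [← integral_div_two_mul_sq ha hab]
  exact tendsto_integral_interp_sq_div ha hab hQ₁ hQ hmeas h01 hlim

theorem intervalIntegrable_interp_sq_div {f : ℝ → ℝ} (ha : 0 < a) (hab : a ≤ b) (hQ₁ : 0 ≤ Q₁)
    (hQ : Q₁ ≤ Q₂) (hf : Measurable f) (h01 : ∀ r, f r ∈ Icc (0 : ℝ) 1) :
    IntervalIntegrable (fun r => (Q₁ + (Q₂ - Q₁) * f r) ^ 2 / (2 * r ^ 2)) volume a b := by
  refine (intervalIntegrable_const (c := Q₂ ^ 2 / (2 * a ^ 2))).mono_fun'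
    (measurable_interp_sq_div hf).aestronglyMeasurable
    (ae_restrict_of_forall_mem measurableSet_uIoc fun r hr => ?_)
  rw [uIoc_of_le hab] at hr
  exact abs_interp_sq_div_le ha hr.1.le hQ₁ hQ (h01 r)

theorem strictAnti_integral_interp_sq_div [Preorder ι] (ha : 0 < a) (hab : a < b) (hQ₁ : 0 ≤ Q₁)
    (hQ : Q₁ < Q₂) (hmeas : ∀ ξ, Measurable fun r => φ r ξ)
    (h01 : ∀ r ξ, φ r ξ ∈ Icc (0 : ℝ) 1) (hanti : ∀ r, StrictAnti (φ r)) :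
    StrictAnti fun ξ => ∫ r in a..b, (Q₁ + (Q₂ - Q₁) * φ r ξ) ^ 2 / (2 * r ^ 2) := by
  refine strictAnti_intervalIntegral hab
    (fun ξ => intervalIntegrable_interp_sq_div ha hab.le hQ₁ hQ.le (hmeas ξ) (h01 · ξ))
    fun r hr ξ η hξη => ?_
  have hr : 0 < r := ha.trans hr.1
  have hQ' : 0 < Q₂ - Q₁ := sub_pos.2 hQ
  have hφ := hanti r hξη
  have hφ₀ := (h01 r η).1
  dsimp only
  gcongr

theorem continuous_integral_interp_sq_div [TopologicalSpace ι] [FirstCountableTopology ι]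
    (ha : 0 < a) (hab : a ≤ b) (hQ₁ : 0 ≤ Q₁) (hQ : Q₁ ≤ Q₂)
    (hmeas : ∀ ξ, Measurable fun r => φ r ξ) (h01 : ∀ r ξ, φ r ξ ∈ Icc (0 : ℝ) 1)
    (hcont : ∀ r, Continuous (φ r)) :
    Continuous fun ξ => ∫ r in a..b, (Q₁ + (Q₂ - Q₁) * φ r ξ) ^ 2 / (2 * r ^ 2) :=
  continuous_iff_continuousAt.2 fun _ =>
    tendsto_integral_interp_sq_div ha hab hQ₁ hQ hmeas h01 fun r => (hcont r).continuousAt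

end ChargeInterpolation

theorem stmt5_general (r₁ r₂ Q₁ Q₂ ϖ₁ ϖ₂ : ℝ) (hr₁ : 0 < r₁) (hr₁₂ : r₁ < r₂)
    (hQ : Q₁ < Q₂) (hQ₁ : 0 ≤ Q₁)
    (ψ : ℝ → ℝ → ℝ)
    (hψcont : Continuous fun p : ℝ × ℝ => ψ p.1 p.2)
    (hψderiv : ∀ x ξ : ℝ, deriv (ψ x) ξ < 0)
    (hψ01 : ∀ x ξ : ℝ, 0 < ψ x ξ ∧ ψ x ξ < 1)
    (hψtop : ∀ x : ℝ, Tendsto (ψ x) atTop (nhds 0))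
    (hψbot : ∀ x : ℝ, Tendsto (ψ x) atBot (nhds 1)) :
    let Qc : ℝ → ℝ → ℝ := fun r ξ =>
      Q₁ + (Q₂ - Q₁) * ψ (Real.log ((r - r₁) / (r₂ - r))) ξ
    let Pmap : ℝ → ℝ := fun ξ =>
      ϖ₁ + Q₂ ^ 2 / (2 * r₂) - Q₁ ^ 2 / (2 * r₁)
        + ∫ r in r₁..r₂, (Qc r ξ) ^ 2 / (2 * r ^ 2)
    StrictAnti Pmap ∧
      Tendsto Pmap atTop (nhds (ϖ₁ + (Q₂ ^ 2 - Q₁ ^ 2) / (2 * r₂))) ∧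
      Tendsto Pmap atBot (nhds (ϖ₁ + (Q₂ ^ 2 - Q₁ ^ 2) / (2 * r₁))) ∧
      (2 * r₁ * (ϖ₂ - ϖ₁) < Q₂ ^ 2 - Q₁ ^ 2 → Q₂ ^ 2 - Q₁ ^ 2 < 2 * r₂ * (ϖ₂ - ϖ₁) →
        ∃! ξ : ℝ, Pmap ξ = ϖ₂) := by
  intro Qc Pmap
  have hmeas : ∀ ξ, Measurable fun r => ψ (Real.log ((r - r₁) / (r₂ - r))) ξ := fun ξ =>
    (hψcont.comp (continuous_id.prodMk continuous_const)).measurable.comp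
      (Real.measurable_log.comp (by fun_prop))
  have h01 : ∀ r ξ, ψ (Real.log ((r - r₁) / (r₂ - r))) ξ ∈ Icc (0 : ℝ) 1 :=
    fun _ ξ => ⟨(hψ01 _ ξ).1.le, (hψ01 _ ξ).2.le⟩
  have hTop : Tendsto Pmap atTop (nhds (ϖ₁ + (Q₂ ^ 2 - Q₁ ^ 2) / (2 * r₂))) := by
    convert (tendsto_integral_interp_sq_div_const hr₁ hr₁₂.le hQ₁ hQ.le hmeas h01
      fun _ => hψtop _).const_add (ϖ₁ + Q₂ ^ 2 / (2 * r₂) - Q₁ ^ 2 / (2 * r₁)) using 2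
    ring
  have hBot : Tendsto Pmap atBot (nhds (ϖ₁ + (Q₂ ^ 2 - Q₁ ^ 2) / (2 * r₁))) := by
    convert (tendsto_integral_interp_sq_div_const hr₁ hr₁₂.le hQ₁ hQ.le hmeas h01
      fun _ => hψbot _).const_add (ϖ₁ + Q₂ ^ 2 / (2 * r₂) - Q₁ ^ 2 / (2 * r₁)) using 2
    ring
  have hanti : StrictAnti Pmap := fun _ _ h => add_lt_add_right
    (strictAnti_integral_interp_sq_div hr₁ hr₁₂ hQ₁ hQ hmeas h01
      (fun _ => strictAnti_of_deriv_neg (hψderiv _)) h) _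
  have hcont : Continuous Pmap := continuous_const.add
    (continuous_integral_interp_sq_div hr₁ hr₁₂.le hQ₁ hQ.le hmeas h01
      fun _ => hψcont.comp (continuous_const.prodMk continuous_id))
  refine ⟨hanti, hTop, hBot, fun hlow hupp =>
    hanti.existsUnique_eq_of_tendsto hcont hTop hBot ?_ ?_⟩
  · rw [← lt_sub_iff_add_lt', div_lt_iff₀ (by linarith)]
    linarith
  · rw [← sub_lt_iff_lt_add', lt_div_iff₀ (by positivity)]
    linarith

/-- The final-mass functional `Π(ξ)` of the charge profile `Q̌(·,ξ)` is strictly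
decreasing in the modulation parameter `ξ`, with explicit limits at `±∞`; hence for
admissible target mass `ϖ₂` there is a unique `ξ*` with `Π(ξ*) = ϖ₂`. -/
theorem stmt5 (r₁ r₂ Q₁ Q₂ ϖ₁ ϖ₂ : ℝ) (hr₁ : 0 < r₁) (hr₁₂ : r₁ < r₂)
    (hQ : Q₁ < Q₂) (hQ₁ : 0 ≤ Q₁)
    (ψ : ℝ → ℝ → ℝ)
    (hψcont : Continuous fun p : ℝ × ℝ => ψ p.1 p.2)
    (hψdiff : ∀ x : ℝ, Differentiable ℝ (ψ x))
    (hψderiv : ∀ x ξ : ℝ, deriv (ψ x) ξ < 0)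
    (hψ01 : ∀ x ξ : ℝ, 0 < ψ x ξ ∧ ψ x ξ < 1)
    (hψtop : ∀ x : ℝ, Tendsto (ψ x) atTop (nhds 0))
    (hψbot : ∀ x : ℝ, Tendsto (ψ x) atBot (nhds 1)) :
    let Qc : ℝ → ℝ → ℝ := fun r ξ =>
      Q₁ + (Q₂ - Q₁) * ψ (Real.log ((r - r₁) / (r₂ - r))) ξ
    let Pmap : ℝ → ℝ := fun ξ =>
      ϖ₁ + Q₂ ^ 2 / (2 * r₂) - Q₁ ^ 2 / (2 * r₁)
        + ∫ r in r₁..r₂, (Qc r ξ) ^ 2 / (2 * r ^ 2)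
    StrictAnti Pmap ∧
      Tendsto Pmap atTop (nhds (ϖ₁ + (Q₂ ^ 2 - Q₁ ^ 2) / (2 * r₂))) ∧
      Tendsto Pmap atBot (nhds (ϖ₁ + (Q₂ ^ 2 - Q₁ ^ 2) / (2 * r₁))) ∧
      (2 * r₁ * (ϖ₂ - ϖ₁) < Q₂ ^ 2 - Q₁ ^ 2 → Q₂ ^ 2 - Q₁ ^ 2 < 2 * r₂ * (ϖ₂ - ϖ₁) →
        ∃! ξ : ℝ, Pmap ξ = ϖ₂) :=
  stmt5_general r₁ r₂ Q₁ Q₂ ϖ₁ ϖ₂ hr₁ hr₁₂ hQ hQ₁ ψ hψcont hψderiv hψ01 hψtop hψbot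
end
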